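/- One-step contact property of scheme (4.3) for V(q)=q²/2: with q_j = q_{j-1} + h(1−hα)p_{j-1} − (h²/2)q_{j-1}, p_j = (1−hα)p_{j-1} − (h/2)(q_{j-1}+q_j), and s_j = s_{j-1} + (1/(2h))(q_j−q_{j-1})² − (h/4)(q_j²+q_{j-1}²) − αh s_{j-1} − ε·ΔW, the differential identity ds_j − p_j dq_j = λ (ds_{j-1} − p_{j-1} dq_{j-1}) holds with λ = 1 − αh, where differentials are taken with respect to the initial data (q_{j-1}, p_{j-1}, s_{j-1}) and ΔW is treated as a constant. -/

import Mathlib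

/-!
The scheme is the discrete Hamilton–Jacobi flow of the discrete Lagrangian
`L(a, b) = (b - a)² / (2h) - h/4 (a² + b²)`: one has
`s_j = (1 - αh) s_{j-1} + L(q_{j-1}, q_j) - εΔW`, and the update rules for `q_j`, `p_j` are exactly the
discrete Legendre relations `p_j = ∂₂L(q_{j-1}, q_j)`, `(1 - αh) p_{j-1} = -∂₁L(q_{j-1}, q_j)`.
The chain rule `ds_j = (1 - αh) ds_{j-1} + ∂₁L dq_{j-1} + ∂₂L dq_j` then gives the contact identity.
-/

open ContinuousLinearMap

theorem fderiv_sub_mul_fderiv_eq_of_generatingFunction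
    {E : Type*} [NormedAddCommGroup E] [NormedSpace ℝ E]
    {q s q' s' : E → ℝ} {L : ℝ × ℝ → ℝ} {κ C p p' : ℝ} {x : E}
    (hq : DifferentiableAt ℝ q x) (hs : DifferentiableAt ℝ s x) (hq' : DifferentiableAt ℝ q' x)
    (hL : HasFDerivAt L ((-(κ * p)) • fst ℝ ℝ ℝ + p' • snd ℝ ℝ ℝ) (q x, q' x))
    (hs' : ∀ y, s' y = κ * s y + L (q y, q' y) + C) (v : E) :
    fderiv ℝ s' x v - p' * fderiv ℝ q' x v = κ * (fderiv ℝ s x v - p * fderiv ℝ q x v) := by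
  have hs'_deriv : HasFDerivAt s' (κ • fderiv ℝ s x
      + (-(κ * p) • fst ℝ ℝ ℝ + p' • snd ℝ ℝ ℝ).comp ((fderiv ℝ q x).prod (fderiv ℝ q' x))) x := by
    rw [show s' = _ from funext hs']
    exact ((hs.hasFDerivAt.const_mul κ).add
      (hL.comp x (hq.hasFDerivAt.prodMk hq'.hasFDerivAt))).add_const C
  rw [hs'_deriv.fderiv]
  simp only [add_apply, smul_apply, comp_apply, prod_apply, coe_fst', coe_snd', smul_eq_mul]
  ring

noncomputable def quadraticDiscreteLagrangian (h : ℝ) (z : ℝ × ℝ) : ℝ :=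
  1 / (2 * h) * (z.2 - z.1) ^ 2 - h / 4 * (z.2 ^ 2 + z.1 ^ 2)

theorem hasFDerivAt_quadraticDiscreteLagrangian (h : ℝ) (z : ℝ × ℝ) :
    HasFDerivAt (quadraticDiscreteLagrangian h)
      ((-((z.2 - z.1) / h) - h / 2 * z.1) • fst ℝ ℝ ℝ
        + ((z.2 - z.1) / h - h / 2 * z.2) • snd ℝ ℝ ℝ) z := by
  have h₁ : HasFDerivAt (Prod.fst : ℝ × ℝ → ℝ) (fst ℝ ℝ ℝ) z := hasFDerivAt_fst
  have h₂ : HasFDerivAt (Prod.snd : ℝ × ℝ → ℝ) (snd ℝ ℝ ℝ) z := hasFDerivAt_snd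
  have hL : HasFDerivAt (quadraticDiscreteLagrangian h) _ z :=
    (((h₂.sub h₁).pow 2).const_mul (1 / (2 * h))).sub
      (((h₂.pow 2).add (h₁.pow 2)).const_mul (h / 4))
  refine hL.congr_fderiv (ContinuousLinearMap.ext fun w => ?_)
  simp only [add_apply, sub_apply, smul_apply, coe_fst', coe_snd', Pi.sub_apply, smul_eq_mul,
    nsmul_eq_mul]
  ring

/-- one-step contact property of scheme (4.3) for `V(q)=q²/2`.  Viewing
`(q_j, p_j, s_j)` as smooth functions of the initial data `x = (q_{j-1}, p_{j-1}, s_{j-1})`,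
the pullback identity `ds_j − p_j dq_j = (1−αh)(ds_{j-1} − p_{j-1} dq_{j-1})` holds,
stated as an equality of covectors (differentials in the three initial variables). -/
theorem scheme_one_step_contact
    (h α ε ΔW : ℝ) (hh : h ≠ 0)
    (qj pj sj : ℝ × ℝ × ℝ → ℝ)
    (hqj : ∀ x, qj x = x.1 + h * (1 - h * α) * x.2.1 - h ^ 2 / 2 * x.1)
    (hpj : ∀ x, pj x = (1 - h * α) * x.2.1 - h / 2 * (x.1 + qj x))
    (hsj : ∀ x, sj x = x.2.2 + (1 / (2 * h)) * (qj x - x.1) ^ 2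
        - h / 4 * ((qj x) ^ 2 + x.1 ^ 2) - α * h * x.2.2 - ε * ΔW) :
    ∀ (x v : ℝ × ℝ × ℝ),
      fderiv ℝ sj x v - pj x * fderiv ℝ qj x v
        = (1 - α * h) *
          (fderiv ℝ (fun y : ℝ × ℝ × ℝ => y.2.2) x v
            - x.2.1 * fderiv ℝ (fun y : ℝ × ℝ × ℝ => y.1) x v) := by
  intro x v
  have hqj_diff : DifferentiableAt ℝ qj x := by
    rw [show qj = _ from funext hqj]
    fun_prop
  have hsj_generated : ∀ y, sj y = (1 - α * h) * y.2.2
      + quadraticDiscreteLagrangian h (y.1, qj y) + -(ε * ΔW) := fun y => by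
    rw [hsj, quadraticDiscreteLagrangian]
    ring
  have hdifference_quotient : (qj x - x.1) / h = (1 - h * α) * x.2.1 - h / 2 * x.1 := by
    rw [hqj]
    field_simp
    ring
  refine fderiv_sub_mul_fderiv_eq_of_generatingFunction (by fun_prop) (by fun_prop) hqj_diff
    ?_ hsj_generated v
  convert hasFDerivAt_quadraticDiscreteLagrangian h (x.1, qj x) using 3
  · simp only [hdifference_quotient]
    ring
  · simp only [hpj, hdifference_quotient]
    ring
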